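/- Let N be a feed-forward network with layers C₀, C₁, …, C_m, m ≥ 1, and adjacency matrices A₁, …, A_k, and let f₁, …, f_k be reals with Σ_{i=1}^k f_i ≠ 0. Then the generalized kernel of J = Σ_{i=1}^k f_i·A_i (i.e., with internal linearization f₀ = 0) has dimension |C₁| + |C₂| + … + |C_m| = |C| − |C₀|. -/

import Mathlib

/-!
Write `J v c = ∑ i, f i * v (σ i c)`. On a layer-0 cell every `σ i` is the identity, so there
`(J ^ r) v = (∑ i, f i) ^ r • v`; since `∑ i, f i ≠ 0`, a generalized null vector vanishes on
`C₀`. Conversely, `J` lowers the layer of every other cell by one, so `J ^ m` kills every vector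
vanishing on `C₀`. The generalized kernel is therefore the kernel of restriction to `C₀`, which
has codimension `|C₀|`.
-/

open Module

namespace FeedForward

variable {R : Type*} {C : Type*} [Fintype C] {k : ℕ}

theorem finrank_ker_funLeft_subtype_val [Field R] (p : C → Prop) [DecidablePred p] :
    finrank R (LinearMap.ker (LinearMap.funLeft R R (Subtype.val : {c // p c} → C))) =
      Fintype.card C - Fintype.card {c // p c} := by
  have hrange : LinearMap.range (LinearMap.funLeft R R (Subtype.val : {c // p c} → C)) = ⊤ :=
    LinearMap.range_eq_top.mpr
      (LinearMap.funLeft_surjective_of_injective _ _ _ Subtype.val_injective)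
  have := LinearMap.finrank_range_add_finrank_ker
    (LinearMap.funLeft R R (Subtype.val : {c // p c} → C))
  rw [hrange, finrank_top, Module.finrank_fintype_fun_eq_card,
    Module.finrank_fintype_fun_eq_card] at this
  omega

variable [DecidableEq C]

/-- The linearization `J = ∑ i, f i • A i` at a synchronous equilibrium with `f₀ = 0`. -/
noncomputable def jacobian [CommSemiring R] (σ : Fin k → C → C) (f : Fin k → R) :
    Module.End R (C → R) :=
  Matrix.toLin' (∑ i, f i • Matrix.of (fun c c' => if c' = σ i c then (1 : R) else 0))

theorem jacobian_apply [CommSemiring R] (σ : Fin k → C → C) (f : Fin k → R) (v : C → R)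
    (c : C) : jacobian σ f v c = ∑ i, f i * v (σ i c) := by
  simp [jacobian, Matrix.toLin'_apply, Matrix.mulVec, dotProduct, mul_ite, ite_mul]

theorem jacobian_pow_apply_of_forall_eq [CommSemiring R] (σ : Fin k → C → C) (f : Fin k → R)
    {c : C} (hc : ∀ i, σ i c = c) (r : ℕ) (v : C → R) :
    (jacobian σ f ^ r) v c = (∑ i, f i) ^ r * v c := by
  induction r generalizing v with
  | zero => simp
  | succ r ih =>
    rw [pow_succ, Module.End.mul_apply, ih, jacobian_apply, pow_succ, mul_assoc,
      Finset.sum_mul]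
    simp only [hc]

theorem jacobian_pow_apply_eq_zero [CommSemiring R] (σ : Fin k → C → C) (f : Fin k → R)
    {layer : C → ℕ} (hpred : ∀ i c, layer (σ i c) = layer c - 1) {v : C → R}
    (hv : ∀ c, layer c = 0 → v c = 0) (r : ℕ) {c : C} (hc : layer c ≤ r) :
    (jacobian σ f ^ r) v c = 0 := by
  induction r generalizing c with
  | zero => simpa using hv c (by omega)
  | succ r ih =>
    rw [pow_succ', Module.End.mul_apply, jacobian_apply]
    exact Finset.sum_eq_zero fun i _ => by rw [ih (by rw [hpred]; omega), mul_zero]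

theorem maxGenEigenspace_jacobian_zero [Field R] (σ : Fin k → C → C) (f : Fin k → R)
    {layer : C → ℕ} {m : ℕ} (hlayer : ∀ c, layer c ≤ m)
    (hfix : ∀ i c, layer c = 0 → σ i c = c) (hpred : ∀ i c, layer (σ i c) = layer c - 1)
    (hval : ∑ i, f i ≠ 0) :
    (jacobian σ f).maxGenEigenspace 0 =
      LinearMap.ker (LinearMap.funLeft R R (Subtype.val : {c // layer c = 0} → C)) := by
  ext v
  simp only [Module.End.mem_maxGenEigenspace, zero_smul, sub_zero, LinearMap.mem_ker,
    funext_iff, LinearMap.funLeft_apply, Pi.zero_apply, Subtype.forall]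
  constructor
  · rintro ⟨r, hr⟩ c hc
    have hrc := hr c
    rw [jacobian_pow_apply_of_forall_eq σ f (fun i => hfix i c hc)] at hrc
    exact (mul_eq_zero.mp hrc).resolve_left (pow_ne_zero r hval)
  · exact fun hv => ⟨m, fun c => jacobian_pow_apply_eq_zero σ f hpred hv m (hlayer c)⟩

end FeedForward

open FeedForward in
theorem stmt_12_general {C : Type*} [Fintype C] [DecidableEq C] {k : ℕ}
    (σ : Fin k → C → C) (m : ℕ)
    (layer : C → ℕ) (hlayer : ∀ c, layer c ≤ m)
    (hfix : ∀ i c, layer c = 0 → σ i c = c)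
    (hdown : ∀ i c j, layer c = j + 1 → layer (σ i c) = j)
    (f : Fin k → ℝ) (hval : ∑ i, f i ≠ 0) :
    Module.finrank ℝ
        (Module.End.maxGenEigenspace
          (Matrix.toLin'
            (∑ i, f i • Matrix.of (fun c c' => if c' = σ i c then (1 : ℝ) else 0)))
          0) =
      Fintype.card C - (Finset.univ.filter (fun c => layer c = 0)).card := by
  have hpred : ∀ i c, layer (σ i c) = layer c - 1 := fun i c => by
    rcases hc : layer c with _ | j
    · rw [hfix i c hc, hc]
    · exact hdown i c j hc
  change finrank ℝ ((jacobian σ f).maxGenEigenspace 0) = _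
  rw [maxGenEigenspace_jacobian_zero σ f hlayer hfix hpred hval,
    finrank_ker_funLeft_subtype_val, Fintype.card_subtype]

/-- for a feed-forward network with layers `C₀,…,C_m`, `m ≥ 1`,
when the bifurcation condition is associated to the internal dynamics
(`f₀ = 0`, `Σ f_i ≠ 0`), the generalized kernel of `J = Σ f_i·A_i` has
dimension `|C| − |C₀| = |C₁| + … + |C_m|`. -/
theorem stmt_12 {C : Type*} [Fintype C] [DecidableEq C] {k : ℕ}
    (σ : Fin k → C → C) (m : ℕ) (hm : 1 ≤ m)
    (layer : C → ℕ) (hlayer : ∀ c, layer c ≤ m)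
    (hsurj : ∀ j ≤ m, ∃ c, layer c = j)
    (hfix : ∀ i c, layer c = 0 → σ i c = c)
    (hdown : ∀ i c j, layer c = j + 1 → layer (σ i c) = j)
    (f : Fin k → ℝ) (hval : ∑ i, f i ≠ 0) :
    Module.finrank ℝ
        (Module.End.maxGenEigenspace
          (Matrix.toLin'
            (∑ i, f i • Matrix.of (fun c c' => if c' = σ i c then (1 : ℝ) else 0)))
          0) =
      Fintype.card C - (Finset.univ.filter (fun c => layer c = 0)).card :=
  stmt_12_general σ m layer hlayer hfix hdown f hval
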